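/- arXiv:2004.02217 — 4 statements merged into one kernel-verified Lean document; each statement's English description precedes it below -/
import Mathlib

section
/- For every natural number k ≥ 1 and every real number θ with 0 ≤ θ ≤ π/k, one has sin²(kθ/2) ≥ k·sin²(θ/2). -/
open Real

lemma aux_sin_mono {v u : ℝ} (hv : 0 ≤ v) (h1 : v ≤ u) (h2 : u ≤ Real.pi - v) :
    Real.sin v ≤ Real.sin u := by
  rcases le_or_gt u (Real.pi / 2) with h | h
  · exact Real.sin_le_sin_of_le_of_le_pi_div_two (by linarith [Real.pi_pos]) h h1
  · rw [← Real.sin_pi_sub u]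
    exact Real.sin_le_sin_of_le_of_le_pi_div_two (by linarith [Real.pi_pos])
      (by linarith) (by linarith)

lemma one_sub_cos_half (θ : ℝ) : 1 - Real.cos θ = 2 * Real.sin (θ / 2) ^ 2 := by
  have h := Real.cos_sub_cos 0 θ
  simp only [Real.cos_zero, zero_add, zero_sub] at h
  rw [h]
  rw [neg_div, Real.sin_neg]
  ring

lemma cos_ineq (k : ℕ) : ∀ θ : ℝ, 0 ≤ θ → θ ≤ Real.pi / k →
    (k : ℝ) * (1 - Real.cos θ) ≤ 1 - Real.cos (k * θ) := by
  induction k with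
  | zero => intro θ _ _; simp
  | succ n ih =>
    intro θ h0 h1
    have hnp : (0:ℝ) < (n:ℝ) + 1 := by positivity
    rcases Nat.eq_zero_or_pos n with hn | hn
    · subst hn; push_cast; simp
    have h1' : θ ≤ Real.pi / ((n:ℝ)+1) := by push_cast at h1; exact h1
    rw [le_div_iff₀ hnp] at h1'
    have hθπ : ((n:ℝ) + 1) * θ ≤ Real.pi := by nlinarith
    have hn' : (0:ℝ) < n := by exact_mod_cast hn
    have hθπn : θ ≤ Real.pi / n := by
      rw [le_div_iff₀ hn']
      nlinarith
    have ihn := ih θ h0 hθπn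
    -- cos (nθ) - cos ((n+1)θ) = 2 sin((2n+1)θ/2) sin(θ/2)
    have hkey : Real.cos ((n:ℝ) * θ) - Real.cos (((n:ℝ)+1) * θ)
        = 2 * Real.sin ((2*(n:ℝ)+1) * θ / 2) * Real.sin (θ / 2) := by
      rw [Real.cos_sub_cos]
      have e1 : ((n:ℝ) * θ + ((n:ℝ)+1) * θ) / 2 = (2*(n:ℝ)+1) * θ / 2 := by ring
      have e2 : ((n:ℝ) * θ - ((n:ℝ)+1) * θ) / 2 = -(θ/2) := by ring
      rw [e1, e2, Real.sin_neg]; ring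
    have hsin : Real.sin (θ/2) ≤ Real.sin ((2*(n:ℝ)+1) * θ / 2) := by
      apply aux_sin_mono (by positivity)
      · nlinarith
      · nlinarith
    have hs0 : 0 ≤ Real.sin (θ/2) := by
      apply Real.sin_nonneg_of_nonneg_of_le_pi (by positivity)
      nlinarith [Real.pi_pos]
    have h2 : 2 * Real.sin (θ/2) ^ 2 ≤ Real.cos ((n:ℝ) * θ) - Real.cos (((n:ℝ)+1) * θ) := by
      rw [hkey]; nlinarith
    rw [one_sub_cos_half θ] at ihn ⊢
    push_cast
    nlinarith

/-- Lemma 3.1: for every `k ≥ 1` and `θ ∈ [0, π/k]`, `sin²(kθ/2) ≥ k·sin²(θ/2)`. -/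
theorem sin_sq_half_mul_ge (k : ℕ) (hk : 1 ≤ k) (θ : ℝ) (hθ0 : 0 ≤ θ)
    (hθ1 : θ ≤ Real.pi / k) :
    Real.sin (k * θ / 2) ^ 2 ≥ (k : ℝ) * Real.sin (θ / 2) ^ 2 := by
  have h := cos_ineq k θ hθ0 hθ1
  rw [one_sub_cos_half θ, one_sub_cos_half ((k:ℝ) * θ)] at h
  nlinarith
end

section
/- For every natural number k ≥ 1 and every real number y with 0 ≤ y ≤ π/2, one has sin(y) ≥ √k·sin(y/k). -/
open Real

/-- Claim (eq:claimsin): for `k ≥ 1` and `y ∈ [0, π/2]`, `sin y ≥ √k · sin(y/k)`. -/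
theorem sin_ge_sqrt_mul_sin_div (k : ℕ) (hk : 1 ≤ k) (y : ℝ) (hy0 : 0 ≤ y)
    (hy1 : y ≤ Real.pi / 2) :
    Real.sin y ≥ Real.sqrt k * Real.sin (y / k) := by
  have hpi := Real.pi_pos
  match k, hk with
  | 1, _ => simp
  | 2, _ =>
    -- sin y = 2 sin(y/2) cos(y/2)
    have h2 : Real.sin y = 2 * Real.sin (y / 2) * Real.cos (y / 2) := by
      have := Real.sin_two_mul (y / 2)
      rw [show 2 * (y / 2) = y by ring] at this
      linarith
    have hs : 0 ≤ Real.sin (y / 2) :=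
      Real.sin_nonneg_of_nonneg_of_le_pi (by linarith) (by linarith)
    have hc : Real.sqrt 2 / 2 ≤ Real.cos (y / 2) := by
      have h4 : Real.cos (π / 4) = Real.sqrt 2 / 2 := Real.cos_pi_div_four
      rw [← h4]
      apply Real.cos_le_cos_of_nonneg_of_le_pi (by linarith) (by linarith)
      linarith
    have key : Real.sqrt 2 * Real.sin (y / 2) ≤ 2 * Real.sin (y / 2) * Real.cos (y / 2) := by
      calc Real.sqrt 2 * Real.sin (y / 2) = 2 * Real.sin (y / 2) * (Real.sqrt 2 / 2) := by ring
        _ ≤ 2 * Real.sin (y / 2) * Real.cos (y / 2) := by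
            apply mul_le_mul_of_nonneg_left hc (by linarith)
    rw [ge_iff_le, h2]
    push_cast
    exact key
  | (n + 3), _ =>
    set k : ℕ := n + 3 with hkdef
    have hk3 : (3 : ℝ) ≤ (k : ℝ) := by exact_mod_cast Nat.le_add_left 3 n
    have hkpos : (0 : ℝ) < (k : ℝ) := by linarith
    have hsq : (1.7 : ℝ) ≤ Real.sqrt k := by
      rw [show (1.7 : ℝ) = Real.sqrt (1.7 ^ 2) by rw [Real.sqrt_sq]; norm_num]
      apply Real.sqrt_le_sqrt; nlinarith
    have hsqpos : (0 : ℝ) < Real.sqrt k := by linarith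
    have h1 : Real.sin (y / k) ≤ y / k := Real.sin_le (by positivity)
    have h2 : Real.sqrt k * Real.sin (y / k) ≤ Real.sqrt k * (y / k) :=
      mul_le_mul_of_nonneg_left h1 (le_of_lt hsqpos)
    have hsqsq : Real.sqrt k * Real.sqrt k = (k : ℝ) := Real.mul_self_sqrt (le_of_lt hkpos)
    have h3 : Real.sqrt k * (y / k) = y / Real.sqrt k := by
      field_simp
      nlinarith
    have h4 : y / Real.sqrt k ≤ 2 / π * y := by
      rw [div_le_iff₀ hsqpos]
      have hpi315 : π < 3.15 := Real.pi_lt_d2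
      have : (2 : ℝ) / π * Real.sqrt k ≥ 2 / 3.15 * 1.7 := by
        apply mul_le_mul (by gcongr) hsq (by norm_num) (by positivity)
      nlinarith [this]
    have h5 : 2 / π * y ≤ Real.sin y := Real.mul_le_sin hy0 hy1
    rw [ge_iff_le]
    calc Real.sqrt k * Real.sin (y / k) ≤ Real.sqrt k * (y / k) := h2
      _ = y / Real.sqrt k := h3
      _ ≤ 2 / π * y := h4
      _ ≤ Real.sin y := h5
end

section
/- Let N ≥ 2 be a natural number and set θ_N = 2π/N. For all integers a, b, setting u = exp(ι·2πa/N) and v = exp(ι·2πb/N) (so that u, v ∈ S_N), one has |u − v|² ≥ (4·sin²(θ_N/2)/θ_N)·d_{S¹}(u,v). -/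
/-! For unit vectors `‖u - v‖² = 2 - 2 cos d` with `d = d_{S¹}(u, v)`, and for `u, v ∈ S_N`
the angle `d` is `k θ` for some `k ∈ ℕ` with `k θ ≤ π` (reduce `(b - a) θ` modulo `2π`
into `(-π, π]`). The claim thus reads `k (1 - cos θ) ≤ 1 - cos (k θ)`, which follows by
induction on `k` from the superadditivity of `1 - cos` on `[0, π]`. -/

/-- The geodesic distance on the unit circle `S¹ ⊂ ℂ`:
`d_{S¹}(u,v) = arccos(Re(conj(u)·v))`, the angle in `[0,π]` between `u` and `v`. -/
noncomputable def dS1 (u v : ℂ) : ℝ :=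
  Real.arccos (((starRingEnd ℂ) u * v).re)

open Real

lemma one_sub_cos_add_sub_eq (x y : ℝ) :
    (1 - cos (x + y)) - (1 - cos x) - (1 - cos y) =
      4 * sin (x / 2) * sin (y / 2) * cos ((x + y) / 2) := by
  obtain ⟨p, rfl⟩ : ∃ p, x = 2 * p := ⟨x / 2, by ring⟩
  obtain ⟨q, rfl⟩ : ∃ q, y = 2 * q := ⟨y / 2, by ring⟩
  rw [show (2 * p + 2 * q) / 2 = p + q by ring, show 2 * p / 2 = p by ring,
    show 2 * q / 2 = q by ring, show 2 * p + 2 * q = 2 * (p + q) by ring]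
  simp only [cos_two_mul, cos_add]
  linear_combination
    2 * sin q ^ 2 * sin_sq_add_cos_sq p + 2 * (1 - cos p ^ 2) * sin_sq_add_cos_sq q

lemma one_sub_cos_add_le {x y : ℝ} (hx : 0 ≤ x) (hy : 0 ≤ y) (hxy : x + y ≤ π) :
    (1 - cos x) + (1 - cos y) ≤ 1 - cos (x + y) := by
  have hsx : 0 ≤ sin (x / 2) := sin_nonneg_of_nonneg_of_le_pi (by linarith) (by linarith)
  have hsy : 0 ≤ sin (y / 2) := sin_nonneg_of_nonneg_of_le_pi (by linarith) (by linarith)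
  have hc : 0 ≤ cos ((x + y) / 2) := cos_nonneg_of_mem_Icc ⟨by linarith, by linarith⟩
  have := one_sub_cos_add_sub_eq x y
  linarith [mul_nonneg (mul_nonneg hsx hsy) hc]

lemma natCast_mul_one_sub_cos_le {θ : ℝ} (hθ : 0 ≤ θ) :
    ∀ {k : ℕ}, k * θ ≤ π → k * (1 - cos θ) ≤ 1 - cos (k * θ)
  | 0, _ => by simp
  | k + 1, hk => by
    push_cast at hk ⊢
    have hkθ : k * θ ≤ π := by linarith
    calc (k + 1) * (1 - cos θ) = k * (1 - cos θ) + (1 - cos θ) := by ring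
      _ ≤ (1 - cos (k * θ)) + (1 - cos θ) := by
        gcongr; exact natCast_mul_one_sub_cos_le hθ hkθ
      _ ≤ 1 - cos (k * θ + θ) := one_sub_cos_add_le (by positivity) hθ (by linarith)
      _ = 1 - cos ((k + 1) * θ) := by ring_nf

lemma arccos_cos_eq_abs_toIocMod (x : ℝ) : arccos (cos x) = |toIocMod two_pi_pos (-π) x| := by
  have hy := toIocMod_mem_Ioc two_pi_pos (-π) x
  have hcos : cos x = cos |toIocMod two_pi_pos (-π) x| := by
    rw [cos_abs, ← self_sub_toIocDiv_zsmul, zsmul_eq_mul, cos_sub_int_mul_two_pi]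
  rw [hcos, arccos_cos (abs_nonneg _) (abs_le.2 ⟨by linarith [hy.1], by linarith [hy.2]⟩)]

lemma exists_arccos_cos_intCast_mul_eq_natCast_mul {θ : ℝ} (hθ : 0 ≤ θ) {N : ℤ}
    (hN : N * θ = 2 * π) (m : ℤ) : ∃ k : ℕ, arccos (cos (m * θ)) = k * θ := by
  refine ⟨(m - toIocDiv two_pi_pos (-π) (m * θ) * N).natAbs, ?_⟩
  rw [arccos_cos_eq_abs_toIocMod, ← self_sub_toIocDiv_zsmul, zsmul_eq_mul]
  generalize toIocDiv two_pi_pos (-π) (m * θ) = n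
  rw [← hN, Nat.cast_natAbs]
  push_cast
  rw [← abs_of_nonneg hθ, ← abs_mul, abs_of_nonneg hθ]
  ring_nf

lemma dS1_eq_angle {u v : ℂ} (hu : ‖u‖ = 1) (hv : ‖v‖ = 1) :
    dS1 u v = InnerProductGeometry.angle u v := by
  rw [dS1, InnerProductGeometry.angle, Complex.inner, hu, hv, mul_one, div_one, mul_comm]

open InnerProductGeometry in
lemma norm_sub_sq_eq_two_sub_two_mul_cos_dS1 {u v : ℂ} (hu : ‖u‖ = 1) (hv : ‖v‖ = 1) :
    ‖u - v‖ ^ 2 = 2 - 2 * cos (dS1 u v) := by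
  rw [dS1_eq_angle hu hv, sq,
    norm_sub_sq_eq_norm_sq_add_norm_sq_sub_two_mul_norm_mul_norm_mul_cos_angle, hu, hv]
  ring

lemma dS1_exp_I_mul (α β : ℝ) :
    dS1 (Complex.exp (Complex.I * α)) (Complex.exp (Complex.I * β)) = arccos (cos (β - α)) := by
  rw [dS1, ← Complex.exp_conj, ← Complex.exp_add, ← Complex.exp_ofReal_mul_I_re]
  congr 3
  simp only [map_mul, Complex.conj_I, Complex.conj_ofReal]
  push_cast
  ring

/-- Core estimate of Proposition 3.3: for `u, v ∈ S_N`,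
`|u − v|² ≥ (4·sin²(θ_N/2)/θ_N)·d_{S¹}(u,v)` where `θ_N = 2π/N`. -/
theorem sq_abs_sub_ge_geodesic (N : ℕ) (hN : 2 ≤ N) (θ : ℝ) (hθ : θ = 2 * Real.pi / N)
    (a b : ℤ) (u v : ℂ)
    (hu : u = Complex.exp (Complex.I * (2 * Real.pi * a / N)))
    (hv : v = Complex.exp (Complex.I * (2 * Real.pi * b / N))) :
    ‖u - v‖ ^ 2 ≥ (4 * Real.sin (θ / 2) ^ 2 / θ) * dS1 u v := by
  have hN0 : (N : ℝ) ≠ 0 := by positivity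
  have hθpos : 0 < θ := by rw [hθ]; positivity
  have hNθ : ((N : ℤ) : ℝ) * θ = 2 * π := by rw [hθ]; push_cast; field_simp
  have hu' : u = Complex.exp (Complex.I * ↑(a * θ)) := by rw [hu, hθ]; push_cast; ring_nf
  have hv' : v = Complex.exp (Complex.I * ↑(b * θ)) := by rw [hv, hθ]; push_cast; ring_nf
  obtain ⟨k, hk⟩ := exists_arccos_cos_intCast_mul_eq_natCast_mul hθpos.le hNθ (b - a)
  have hd : dS1 u v = k * θ := by rw [hu', hv', dS1_exp_I_mul, ← hk]; push_cast; ring_nf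
  have hkπ : k * θ ≤ π := hd ▸ arccos_le_pi _
  have hkey := natCast_mul_one_sub_cos_le hθpos.le hkπ
  rw [ge_iff_le, norm_sub_sq_eq_two_sub_two_mul_cos_dS1 (hu' ▸ Complex.norm_exp_I_mul_ofReal _)
    (hv' ▸ Complex.norm_exp_I_mul_ofReal _), hd, sin_sq_eq_half_sub,
    mul_div_cancel₀ _ two_ne_zero]
  calc 4 * (1 / 2 - cos θ / 2) / θ * (k * θ) = 2 * (k * (1 - cos θ)) := by
        field_simp; ring
    _ ≤ 2 - 2 * cos (k * θ) := by linarith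
end

section
/- Let d ≥ 1 be a natural number, λ > 0, i ∈ {1,…,d}, z ∈ ℤ^d, and let φ : ℝ^d → ℝ be continuously differentiable. Set I_λ(λz) = λz + [0,λ)^d and I_λ(λ(z+e_i)) = λ(z+e_i) + [0,λ)^d, and let m₁ = λ^{−d}·∫_{I_λ(λz)} φ(x) dx and m₂ = λ^{−d}·∫_{I_λ(λ(z+e_i))} φ(x) dx be the averages of φ over these cubes. Then d_{S¹}(exp(ι·m₂), exp(ι·m₁)) ≤ λ^{1−d}·∫₀¹ ∫_{I_λ(λz)} |∂_i φ(x + tλe_i)| dx dt. -/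
/-!
Since `arccos ∘ cos ≤ |·|`, the distance on `S¹` between `exp(ι m₂)` and `exp(ι m₁)` is at most
`|m₂ - m₁|`. The cube `I₂` is the translate of `I₁` by `λ e_i`, so
`m₂ - m₁ = λ^{-d} ∫_{I₁} (φ(x + λ e_i) - φ(x)) dx`. The fundamental theorem of calculus along the
segment `[x, x + λ e_i]` followed by Fubini's theorem bounds this by
`λ^{1-d} ∫₀¹ ∫_{I₁} |∂_i φ(x + tλ e_i)| dx dt`.
-/

open MeasureTheory

theorem Real.arccos_cos_le_abs (x : ℝ) : Real.arccos (Real.cos x) ≤ |x| := by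
  rcases le_or_gt |x| Real.pi with h | h
  · rw [← Real.cos_abs, Real.arccos_cos (abs_nonneg x) h]
  · exact (Real.arccos_le_pi _).trans h.le

theorem dS1_exp_I_mul_le (a b : ℝ) :
    dS1 (Complex.exp (Complex.I * a)) (Complex.exp (Complex.I * b)) ≤ |a - b| := by
  have hprod : (starRingEnd ℂ) (Complex.exp (Complex.I * a)) * Complex.exp (Complex.I * b) =
      Complex.exp ((b - a : ℝ) * Complex.I) := by
    rw [← Complex.exp_conj, ← Complex.exp_add, map_mul, Complex.conj_I, Complex.conj_ofReal]
    push_cast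
    ring_nf
  rw [dS1, hprod, Complex.exp_ofReal_mul_I_re, abs_sub_comm]
  exact Real.arccos_cos_le_abs _

section Segment

variable {E F : Type*} [NormedAddCommGroup E] [NormedSpace ℝ E]
  [NormedAddCommGroup F] [NormedSpace ℝ F] [CompleteSpace F] {φ : E → F}

theorem ContDiff.sub_eq_integral_fderiv_segment (hφ : ContDiff ℝ 1 φ) (x v : E) :
    φ (x + v) - φ x = ∫ t in (0 : ℝ)..1, fderiv ℝ φ (x + t • v) v := by
  have hderiv : ∀ t ∈ Set.uIcc (0 : ℝ) 1,
      HasDerivAt (fun s : ℝ ↦ φ (x + s • v)) (fderiv ℝ φ (x + t • v) v) t := fun t _ ↦ by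
    have hline : HasDerivAt (fun s : ℝ ↦ x + s • v) v t := by
      simpa using ((hasDerivAt_id t).smul_const v).const_add x
    exact ((hφ.differentiable one_ne_zero) _).hasFDerivAt.comp_hasDerivAt t hline
  have hcont : Continuous fun t : ℝ ↦ fderiv ℝ φ (x + t • v) v :=
    ((hφ.continuous_fderiv one_ne_zero).comp (by fun_prop)).clm_apply continuous_const
  rw [intervalIntegral.integral_eq_sub_of_hasDerivAt hderiv (hcont.intervalIntegrable _ _)]
  simp

variable [FiniteDimensional ℝ E] [MeasurableSpace E] [BorelSpace E]
  {μ : Measure E} [IsFiniteMeasureOnCompacts μ]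

theorem norm_setIntegral_comp_add_sub_le (hφ : ContDiff ℝ 1 φ) {s : Set E}
    (hs : Bornology.IsBounded s) (v : E) :
    ‖∫ x in s, φ (x + v) ∂μ - ∫ x in s, φ x ∂μ‖ ≤
      ∫ t in (0 : ℝ)..1, ∫ x in s, ‖fderiv ℝ φ (x + t • v) v‖ ∂μ := by
  have hK : IsCompact (closure s) := hs.isCompact_closure
  have hint : ∀ ψ : E → F, Continuous ψ → IntegrableOn ψ s μ := fun ψ hψ ↦
    (hψ.continuousOn.integrableOn_compact hK).mono_set subset_closure
  set g : E → ℝ → F := fun x t ↦ fderiv ℝ φ (x + t • v) v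
  have hg : Integrable (Function.uncurry g)
      ((μ.restrict s).prod (volume.restrict (Set.Ioc 0 1))) := by
    rw [Measure.prod_restrict]
    have : Continuous (Function.uncurry g) :=
      ((hφ.continuous_fderiv one_ne_zero).comp (by fun_prop)).clm_apply continuous_const
    exact (this.continuousOn.integrableOn_compact (hK.prod isCompact_Icc)).mono_set
      (Set.prod_mono subset_closure Set.Ioc_subset_Icc_self)
  calc ‖∫ x in s, φ (x + v) ∂μ - ∫ x in s, φ x ∂μ‖
      = ‖∫ x in s, (∫ t in Set.Ioc (0 : ℝ) 1, g x t) ∂μ‖ := by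
        rw [← integral_sub (hint (fun x ↦ φ (x + v)) (by fun_prop)) (hint _ hφ.continuous)]
        simp_rw [hφ.sub_eq_integral_fderiv_segment, intervalIntegral.integral_of_le zero_le_one, g]
    _ = ‖∫ t in Set.Ioc (0 : ℝ) 1, ∫ x in s, g x t ∂μ‖ := by rw [integral_integral_swap hg]
    _ ≤ ∫ t in Set.Ioc (0 : ℝ) 1, ‖∫ x in s, g x t ∂μ‖ := norm_integral_le_integral_norm _
    _ ≤ ∫ t in Set.Ioc (0 : ℝ) 1, ∫ x in s, ‖g x t‖ ∂μ :=
        integral_mono hg.integral_prod_right.norm hg.norm.integral_prod_right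
          fun t ↦ norm_integral_le_integral_norm _
    _ = _ := (intervalIntegral.integral_of_le zero_le_one).symm

end Segment

section Cube

variable {ι : Type*}

def halfOpenCube (a : ι → ℝ) (r : ℝ) : Set (EuclideanSpace ℝ ι) :=
  {x | ∀ l, x l ∈ Set.Ico (a l) (a l + r)}

theorem isBounded_halfOpenCube [Fintype ι] (a : ι → ℝ) (r : ℝ) :
    Bornology.IsBounded (halfOpenCube a r) := by
  refine ((isCompact_Icc (a := a) (b := a + fun _ ↦ r)).image
    (EuclideanSpace.equiv ι ℝ).symm.continuous).isBounded.subset fun x hx ↦ ?_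
  exact ⟨EuclideanSpace.equiv ι ℝ x, ⟨fun l ↦ (hx l).1, fun l ↦ (hx l).2.le⟩, by simp⟩

theorem halfOpenCube_add (a : ι → ℝ) (v : EuclideanSpace ℝ ι) (r : ℝ) :
    halfOpenCube (a + v.ofLp) r = (· + v) '' halfOpenCube a r := by
  rw [Set.image_add_right]
  ext y
  refine forall_congr' fun l ↦ ?_
  simp only [Pi.add_apply, PiLp.add_apply, PiLp.neg_apply, Set.mem_Ico]
  constructor <;> rintro ⟨h₁, h₂⟩ <;> constructor <;> linarith

end Cube

theorem geodesic_avg_estimate_general (d : ℕ) (lam : ℝ) (hlam : 0 < lam)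
    (i : Fin d) (z : Fin d → ℤ) (φ : EuclideanSpace ℝ (Fin d) → ℝ) (hφ : ContDiff ℝ 1 φ)
    (I₁ I₂ : Set (EuclideanSpace ℝ (Fin d)))
    (hI₁ : I₁ = {x : EuclideanSpace ℝ (Fin d) |
        ∀ l, lam * (z l : ℝ) ≤ x l ∧ x l < lam * (z l : ℝ) + lam})
    (hI₂ : I₂ = {x : EuclideanSpace ℝ (Fin d) |
        ∀ l, lam * ((z l : ℝ) + (if l = i then 1 else 0)) ≤ x l ∧
          x l < lam * ((z l : ℝ) + (if l = i then 1 else 0)) + lam})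
    (m₁ m₂ : ℝ)
    (hm₁ : m₁ = lam ^ (-(d : ℤ)) * ∫ x in I₁, φ x)
    (hm₂ : m₂ = lam ^ (-(d : ℤ)) * ∫ x in I₂, φ x) :
    dS1 (Complex.exp (Complex.I * m₂)) (Complex.exp (Complex.I * m₁)) ≤
      lam ^ ((1 : ℤ) - (d : ℤ)) *
        ∫ t in (0 : ℝ)..1, ∫ x in I₁,
          |fderiv ℝ φ (x + (t * lam) • EuclideanSpace.single i (1 : ℝ))
            (EuclideanSpace.single i (1 : ℝ))| := by
  set e : EuclideanSpace ℝ (Fin d) := EuclideanSpace.single i 1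
  replace hI₁ : I₁ = halfOpenCube (fun l ↦ lam * z l) lam := hI₁
  replace hI₂ : I₂ = (· + lam • e) '' I₁ := by
    change I₂ = halfOpenCube (fun l ↦ lam * (z l + if l = i then 1 else 0)) lam at hI₂
    rw [hI₁, ← halfOpenCube_add, hI₂]
    congr 1
    ext l
    simp [e, mul_add, Pi.single_apply]
  have hm : m₂ - m₁ = lam ^ (-(d : ℤ)) * ((∫ x in I₁, φ (x + lam • e)) - ∫ x in I₁, φ x) := by
    rw [hm₁, hm₂, hI₂, (measurePreserving_add_right volume (lam • e)).setIntegral_image_emb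
      (measurableEmbedding_addRight _), mul_sub]
  have hscale : ∀ (t : ℝ) x, |fderiv ℝ φ (x + t • lam • e) (lam • e)| =
      lam * |fderiv ℝ φ (x + (t * lam) • e) e| := fun t x ↦ by
    rw [smul_smul, map_smul, smul_eq_mul, abs_mul, abs_of_pos hlam]
  calc dS1 (Complex.exp (Complex.I * m₂)) (Complex.exp (Complex.I * m₁))
      ≤ |m₂ - m₁| := dS1_exp_I_mul_le _ _
    _ = lam ^ (-(d : ℤ)) * |(∫ x in I₁, φ (x + lam • e)) - ∫ x in I₁, φ x| := by
      rw [hm, abs_mul, abs_of_pos (zpow_pos hlam _)]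
    _ ≤ lam ^ (-(d : ℤ)) *
        ∫ t in (0 : ℝ)..1, ∫ x in I₁, |fderiv ℝ φ (x + t • lam • e) (lam • e)| := by
      gcongr
      simpa only [Real.norm_eq_abs] using
        norm_setIntegral_comp_add_sub_le hφ (hI₁ ▸ isBounded_halfOpenCube _ _) _
    _ = _ := by
      simp_rw [hscale, integral_const_mul, intervalIntegral.integral_const_mul, sub_eq_add_neg,
        zpow_add₀ hlam.ne', zpow_one]
      ring

/-- Estimate (eq:estimate on good cubes) of Step 4 of Proposition 4.2: the geodesic
distance between `exp(ι·m₂)` and `exp(ι·m₁)`, where `m₁, m₂` are the averages of a lifting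
`φ` over two adjacent cubes `I_λ(λz)`, `I_λ(λ(z+e_i))` of the grid `λℤ^d`, is controlled
by the averaged partial derivative `∂_i φ`. -/
theorem geodesic_avg_estimate (d : ℕ) (hd : 1 ≤ d) (lam : ℝ) (hlam : 0 < lam)
    (i : Fin d) (z : Fin d → ℤ) (φ : EuclideanSpace ℝ (Fin d) → ℝ) (hφ : ContDiff ℝ 1 φ)
    (I₁ I₂ : Set (EuclideanSpace ℝ (Fin d)))
    (hI₁ : I₁ = {x : EuclideanSpace ℝ (Fin d) |
        ∀ l, lam * (z l : ℝ) ≤ x l ∧ x l < lam * (z l : ℝ) + lam})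
    (hI₂ : I₂ = {x : EuclideanSpace ℝ (Fin d) |
        ∀ l, lam * ((z l : ℝ) + (if l = i then 1 else 0)) ≤ x l ∧
          x l < lam * ((z l : ℝ) + (if l = i then 1 else 0)) + lam})
    (m₁ m₂ : ℝ)
    (hm₁ : m₁ = lam ^ (-(d : ℤ)) * ∫ x in I₁, φ x)
    (hm₂ : m₂ = lam ^ (-(d : ℤ)) * ∫ x in I₂, φ x) :
    dS1 (Complex.exp (Complex.I * m₂)) (Complex.exp (Complex.I * m₁)) ≤
      lam ^ ((1 : ℤ) - (d : ℤ)) *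
        ∫ t in (0 : ℝ)..1, ∫ x in I₁,
          |fderiv ℝ φ (x + (t * lam) • EuclideanSpace.single i (1 : ℝ))
            (EuclideanSpace.single i (1 : ℝ))| :=
  geodesic_avg_estimate_general d lam hlam i z φ hφ I₁ I₂ hI₁ hI₂ m₁ m₂ hm₁ hm₂
end
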